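/- Let K and T be inverse semigroups, T acting on K by endomorphisms satisfying (AFR), 𝕊 = K⋊T the full restricted semidirect product, Θ the congruence induced by the second projection, and ω_[t] ∈ Ω(𝕊,Θ) given by ω_[t](x,u) = (t·x, tu), (x,u)ω_[t] = (ran(ut)·x, ut). Then for every (a,t) ∈ 𝕊 the following hold in the inverse semigroup Ω(𝕊,Θ): ω_[t]⁻¹ ω_[t] = ω_[dom(t)], and ω_[dom(t)] ≥ π_{(t⁻¹·dom(a), dom(t))} = π_{dom((a,t))} = π_{(a,t)}⁻¹ π_{(a,t)} in the natural partial order, where π denotes inner bitranslations of 𝕊. -/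
import Mathlib


/-- An inverse semigroup: a semigroup in which every element `a` has a unique
inverse `a⁻¹` satisfying `a * a⁻¹ * a = a` and `a⁻¹ * a * a⁻¹ = a⁻¹`. -/
class InverseSemigroup (S : Type*) extends Semigroup S, Inv S where
  mul_inv_mul : ∀ a : S, a * a⁻¹ * a = a
  inv_mul_inv : ∀ a : S, a⁻¹ * a * a⁻¹ = a⁻¹
  inv_unique : ∀ {a b : S}, a * b * a = a → b * a * b = b → b = a⁻¹

/-- The set of idempotents `E(T)` of a `Mul`-structure. -/
def idemSet (T : Type*) [Mul T] : Set T := {e | e * e = e}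

/-- `ran t = t * t⁻¹`. -/
def iran {T : Type*} [Mul T] [Inv T] (t : T) : T := t * t⁻¹

/-- `dom t = t⁻¹ * t`. -/
def idom {T : Type*} [Mul T] [Inv T] (t : T) : T := t⁻¹ * t

/-- The natural partial order: `a ≤ b` iff `a = e * b` for some idempotent `e`. -/
def nle {T : Type*} [Mul T] (a b : T) : Prop := ∃ e ∈ idemSet T, a = e * b

/-- `b` is an inverse of `a`. -/
def IsInvPair {T : Type*} [Mul T] (a b : T) : Prop := a * b * a = a ∧ b * a * b = b

/-- An action of `T` on `K` by endomorphisms. -/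
def IsAction {K T : Type*} [Mul K] [Mul T] (act : T → K → K) : Prop :=
  (∀ t a b, act t (a * b) = act t a * act t b) ∧
  (∀ t u a, act (t * u) a = act t (act u a))

/-- `ε : K → T` is a (surjective) homomorphism from `K` onto the semilattice
of idempotents `E(T)` of `T`. -/
def IsSurjHomOntoE {K T : Type*} [Mul K] [Mul T] (ε : K → T) : Prop :=
  (∀ a b, ε (a * b) = ε a * ε b) ∧ (∀ a, ε a ∈ idemSet T) ∧
  (∀ e ∈ idemSet T, ∃ a, ε a = e)

/-- Condition (AFR): `e · a = a` iff `ε a ≤ e`, for all `a ∈ K`, `e ∈ E(T)`. -/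
def AFR {K T : Type*} [Mul K] [Mul T] (act : T → K → K) (ε : K → T) : Prop :=
  ∀ (a : K), ∀ e ∈ idemSet T, (act e a = a ↔ nle (ε a) e)

/-- The carrier of the λ-semidirect product `K ⋊^λ T`:
`{(a,t) ∈ K × T : a = ran(t) · a}`. -/
def lsdSet {K T : Type*} [Mul K] [Mul T] [Inv T] (act : T → K → K) :
    Set (K × T) := {p | act (iran p.2) p.1 = p.1}

/-- The multiplication of the λ-semidirect product:
`(a,t)(b,u) = ((ran(tu) · a)(t · b), tu)`. -/
def lsdMul {K T : Type*} [Mul K] [Mul T] [Inv T] (act : T → K → K)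
    (p q : K × T) : K × T :=
  (act (iran (p.2 * q.2)) p.1 * act p.2 q.1, p.2 * q.2)

/-- The carrier of the full restricted semidirect product `K ⋊ T`:
`{(a,t) ∈ K × T : ε a = ran t}`. -/
def rsdSet {K T : Type*} [Mul T] [Inv T] (ε : K → T) : Set (K × T) :=
  {p | ε p.1 = iran p.2}

/-- The multiplication of the full restricted semidirect product:
`(a,t)(b,u) = (a (t · b), tu)`. -/
def rsdMul {K T : Type*} [Mul K] [Mul T] (act : T → K → K)
    (p q : K × T) : K × T :=
  (p.1 * act p.2 q.1, p.2 * q.2)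

/-- The Kernel of the congruence `ker π₂` (equality of second components) on a
subset `C` of a product, with multiplication `m`: all elements of `C` that are
`(ker π₂)`-related to an idempotent of `C`. -/
def pi2Kernel {X Y : Type*} (m : X × Y → X × Y → X × Y) (C : Set (X × Y)) :
    Set (X × Y) :=
  {p | p ∈ C ∧ ∃ q ∈ C, m q q = q ∧ q.2 = p.2}

/-- `(l, r)` is a bitranslation of the subsemigroup on the carrier `C` (with
multiplication `m`): `l` is a left translation, `r` is a right translation
(both mapping `C` into `C`), and they are linked. -/
def IsBitransOn {X : Type*} (m : X → X → X) (C : Set X) (l r : X → X) : Prop :=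
  (∀ s ∈ C, l s ∈ C ∧ r s ∈ C) ∧
  (∀ s ∈ C, ∀ t ∈ C,
      l (m s t) = m (l s) t ∧ r (m s t) = m s (r t) ∧ m s (l t) = m (r s) t)

/-- The pair `(l, r)` respects the congruence `Θ = ker π₂` (equality of second
components) on `C`. -/
def RespectsPi2 {K T : Type*} (C : Set (K × T)) (l r : K × T → K × T) : Prop :=
  ∀ p ∈ C, ∀ q ∈ C, p.2 = q.2 → (l p).2 = (l q).2 ∧ (r p).2 = (r q).2

/-- The bitranslation induced by `(l, r)` on the quotient `𝕊/Θ ≅ T` is the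
inner bitranslation of `T` induced by `t`. -/
def InducesInnerPi2 {K T : Type*} [Mul T] (C : Set (K × T))
    (l r : K × T → K × T) (t : T) : Prop :=
  ∀ p ∈ C, (l p).2 = t * p.2 ∧ (r p).2 = p.2 * t

/-- Membership in `Ω(𝕊, Θ)`: a bitranslation of `𝕊` respecting `Θ` whose
induced bitranslation on `𝕊/Θ ≅ T` is inner. -/
def MemOmegaPi2 {K T : Type*} [Mul T] (m : K × T → K × T → K × T)
    (C : Set (K × T)) (l r : K × T → K × T) : Prop :=
  IsBitransOn m C l r ∧ RespectsPi2 C l r ∧ ∃ t : T, InducesInnerPi2 C l r t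

/-- The left translation part of the bioperator `ω_[t]` on `𝕊 = K ⋊ T`:
`ω_[t](x,u) = (t·x, tu)`. -/
def Ltr {K T : Type*} [Mul T] (act : T → K → K) (t : T) :
    K × T → K × T :=
  fun p => (act t p.1, t * p.2)

/-- The right translation part of the bioperator `ω_[t]` on `𝕊 = K ⋊ T`:
`(x,u)ω_[t] = (ran(ut)·x, ut)`. -/
def Rtr {K T : Type*} [Mul T] [Inv T] (act : T → K → K) (t : T) :
    K × T → K × T :=
  fun p => (act (iran (p.2 * t)) p.1, p.2 * t)

section ISLemmas
variable {S : Type*} [InverseSemigroup S]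

lemma is_mim (a : S) : a * a⁻¹ * a = a := InverseSemigroup.mul_inv_mul a
lemma is_imi (a : S) : a⁻¹ * a * a⁻¹ = a⁻¹ := InverseSemigroup.inv_mul_inv a
lemma is_invu {a b : S} (h1 : a * b * a = a) (h2 : b * a * b = b) : b = a⁻¹ :=
  InverseSemigroup.inv_unique h1 h2
lemma is_inv_inv (a : S) : a⁻¹⁻¹ = a := (is_invu (is_imi a) (is_mim a)).symm

lemma mim1 (a x : S) : a * (a⁻¹ * (a * x)) = a * x := by
  rw [← mul_assoc, ← mul_assoc, is_mim]
lemma mim2 (a : S) : a * (a⁻¹ * a) = a := by rw [← mul_assoc, is_mim]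
lemma imi1 (a x : S) : a⁻¹ * (a * (a⁻¹ * x)) = a⁻¹ * x := by
  rw [← mul_assoc, ← mul_assoc, is_imi]
lemma imi2 (a : S) : a⁻¹ * (a * a⁻¹) = a⁻¹ := by rw [← mul_assoc, is_imi]

lemma idem_self_inv {e : S} (he : e * e = e) : e⁻¹ = e :=
  ((is_invu (by rw [he, he]) (by rw [he, he])).symm : e⁻¹ = e)

lemma idem_mul_idem {e f : S} (he : e * e = e) (hf : f * f = f) :
    (e * f) * (e * f) = e * f := by
  have he' : ∀ y : S, e * (e * y) = e * y := fun y => by rw [← mul_assoc, he]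
  have hf' : ∀ y : S, f * (f * y) = f * y := fun y => by rw [← mul_assoc, hf]
  set x := (e * f)⁻¹ with hx
  have h1 : (e*f) * x * (e*f) = e*f := is_mim _
  have h2 : x * (e*f) * x = x := is_imi _
  have h2' : ∀ y : S, x*(e*(f*(x*y))) = x*y := fun y => by
    rw [show x*(e*(f*(x*y))) = (x*(e*f)*x)*y by simp only [mul_assoc], h2]
  have hfx : f * x * e = x := by
    refine is_invu ?_ ?_
    · have h1' : e*(f*(x*(e*f))) = e*f := by simpa only [mul_assoc] using h1
      simpa only [mul_assoc, he', hf'] using h1'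
    · show (f*x*e)*(e*f)*(f*x*e) = f*x*e
      simp only [mul_assoc, he', hf']
      rw [h2']
  have hxx : x * x = x := by
    rw [← hfx]
    show ((f*x)*e)*((f*x)*e) = (f*x)*e
    simp only [mul_assoc]
    rw [h2']
  have : e * f = x := by rw [← is_inv_inv (e*f), ← hx, idem_self_inv hxx]
  rw [this, hxx]

lemma idem_comm {e f : S} (he : e * e = e) (hf : f * f = f) : e * f = f * e := by
  have he' : ∀ y : S, e * (e * y) = e * y := fun y => by rw [← mul_assoc, he]
  have hf' : ∀ y : S, f * (f * y) = f * y := fun y => by rw [← mul_assoc, hf]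
  have hef := idem_mul_idem he hf
  have hfe := idem_mul_idem hf he
  have h1 : (e*f)*(f*e)*(e*f) = e*f := by
    simpa only [mul_assoc, he', hf'] using hef
  have h2 : (f*e)*(e*f)*(f*e) = f*e := by
    simpa only [mul_assoc, he', hf'] using hfe
  have := is_invu h1 h2
  rw [idem_self_inv hef] at this
  exact this.symm

lemma is_mul_inv_rev (a b : S) : (a * b)⁻¹ = b⁻¹ * a⁻¹ := by
  have hbb : (b*b⁻¹)*(b*b⁻¹) = b*b⁻¹ := by
    simp only [mul_assoc]; rw [imi2]
  have haa : (a⁻¹*a)*(a⁻¹*a) = a⁻¹*a := by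
    simp only [mul_assoc]; rw [imi1]
  symm; apply is_invu
  · calc a*b*(b⁻¹*a⁻¹)*(a*b) = a*((b*b⁻¹)*(a⁻¹*a))*b := by simp only [mul_assoc]
      _ = a*((a⁻¹*a)*(b*b⁻¹))*b := by rw [idem_comm hbb haa]
      _ = a*b := by simp only [mul_assoc]; rw [mim2, mim1]
  · calc (b⁻¹*a⁻¹)*(a*b)*(b⁻¹*a⁻¹) = b⁻¹*((a⁻¹*a)*(b*b⁻¹))*a⁻¹ := by simp only [mul_assoc]
      _ = b⁻¹*((b*b⁻¹)*(a⁻¹*a))*a⁻¹ := by rw [idem_comm haa hbb]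
      _ = b⁻¹*a⁻¹ := by simp only [mul_assoc]; rw [imi2, imi1]

lemma iran_idem (t : S) : iran t * iran t = iran t := by
  simp only [iran, mul_assoc]; rw [imi2]
lemma idom_idem (t : S) : idom t * idom t = idom t := by
  simp only [idom, mul_assoc]; rw [imi1]

lemma nle_of_mul {e f : S} (he : e * e = e) (h : e * f = e) : nle e f := ⟨e, he, h.symm⟩
lemma nle_mul {e f : S} (hf : f * f = f) (h : nle e f) : e * f = e := by
  obtain ⟨g, hg, rfl⟩ := h; rw [mul_assoc, hf]
lemma nle_refl_idem {e : S} (he : e * e = e) : nle e e := ⟨e, he, he.symm⟩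

end ISLemmas

section EpsLemmas
variable {K T : Type*} [InverseSemigroup K] [InverseSemigroup T]
variable {act : T → K → K} {ε : K → T}

lemma eps_idem (hε : IsSurjHomOntoE ε) (a : K) : ε a * ε a = ε a := hε.2.1 a

lemma eps_inv (hε : IsSurjHomOntoE ε) (a : K) : ε a⁻¹ = ε a := by
  have hc := idem_comm (eps_idem hε a) (eps_idem hε a⁻¹)
  have h1 : ε a⁻¹ = ε a⁻¹ * ε a * ε a⁻¹ := by rw [← hε.1, ← hε.1, is_imi]
  have h2 : ε a = ε a * ε a⁻¹ * ε a := by rw [← hε.1, ← hε.1, is_mim]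
  have ha : ε a = ε a * ε a⁻¹ := by
    calc ε a = ε a * ε a⁻¹ * ε a := h2
      _ = ε a * (ε a⁻¹ * ε a) := by rw [mul_assoc]
      _ = ε a * (ε a * ε a⁻¹) := by rw [hc]
      _ = ε a * ε a * ε a⁻¹ := by rw [← mul_assoc]
      _ = ε a * ε a⁻¹ := by rw [eps_idem hε]
  have hb : ε a⁻¹ = ε a * ε a⁻¹ := by
    calc ε a⁻¹ = ε a⁻¹ * ε a * ε a⁻¹ := h1
      _ = ε a * ε a⁻¹ * ε a⁻¹ := by rw [← hc]
      _ = ε a * (ε a⁻¹ * ε a⁻¹) := by rw [mul_assoc]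
      _ = ε a * ε a⁻¹ := by rw [eps_idem hε]
  rw [hb, ← ha]

lemma act_eps_fix (hε : IsSurjHomOntoE ε) (hafr : AFR act ε) (a : K) :
    act (ε a) a = a :=
  (hafr a (ε a) (hε.2.1 a)).2 (nle_refl_idem (hε.2.1 a))

lemma eps_act_le (hact : IsAction act) (hε : IsSurjHomOntoE ε) (hafr : AFR act ε)
    {e : T} (he : e * e = e) (b : K) : ε (act e b) * e = ε (act e b) := by
  have hfix : act e (act e b) = act e b := by rw [← hact.2, he]
  exact nle_mul he ((hafr (act e b) e he).1 hfix)

lemma eps_act_idem (hact : IsAction act) (hε : IsSurjHomOntoE ε) (hafr : AFR act ε)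
    {e : T} (he : e * e = e) (b : K) : ε (act e b) = e * ε b := by
  obtain ⟨k, hk⟩ := hε.2.2 e he
  have hkfix : act e k = k := (hafr k e he).2 (by rw [hk]; exact nle_refl_idem he)
  have hnle : nle (ε (k * b)) e := by
    rw [hε.1, hk]
    refine nle_of_mul (idem_mul_idem he (hε.2.1 b)) ?_
    rw [mul_assoc, idem_comm (hε.2.1 b) he, ← mul_assoc, he]
  have hkb : act e (k * b) = k * b := (hafr (k*b) e he).2 hnle
  have hsplit : k * b = k * act e b := by
    conv_lhs => rw [← hkb]
    rw [hact.1, hkfix]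
  have := congrArg ε hsplit
  rw [hε.1, hε.1, hk] at this
  have hle : e * ε (act e b) = ε (act e b) := by
    rw [idem_comm he (hε.2.1 (act e b))]
    exact eps_act_le hact hε hafr he b
  rw [this, hle]

lemma eps_act (hact : IsAction act) (hε : IsSurjHomOntoE ε) (hafr : AFR act ε)
    (t : T) (b : K) : ε (act t b) = t * ε b * t⁻¹ := by
  set d := t⁻¹ * t with hd
  have hdd : d * d = d := by rw [hd]; simpa only [idom] using idom_idem t
  set b' := act d b with hb'
  have hab : act t b = act t b' := by
    rw [hb', ← hact.2, mim2]
  have heb' : ε b' = d * ε b := eps_act_idem hact hε hafr hdd b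
  have heb'i : ε b' * ε b' = ε b' := hε.2.1 b'
  have hle : ε b' * d = ε b' := by
    rw [heb', mul_assoc, idem_comm (hε.2.1 b) hdd, ← mul_assoc, hdd]
  set c := act t b' with hc
  set e := ε c with he
  have hee : e * e = e := hε.2.1 c
  -- t * εb' * t⁻¹ is idempotent
  have hidem : (t * ε b' * t⁻¹) * (t * ε b' * t⁻¹) = t * ε b' * t⁻¹ := by
    calc (t * ε b' * t⁻¹) * (t * ε b' * t⁻¹)
        = t * (ε b' * ((t⁻¹*t) * ε b')) * t⁻¹ := by simp only [mul_assoc]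
      _ = t * (ε b' * (ε b' * (t⁻¹*t))) * t⁻¹ := by
          rw [idem_comm hdd heb'i]
      _ = t * (ε b' * ε b' * (t⁻¹*t)) * t⁻¹ := by simp only [mul_assoc]
      _ = t * (ε b' * d) * t⁻¹ := by rw [heb'i, ← hd]
      _ = t * ε b' * t⁻¹ := by rw [hle, mul_assoc]
  have hfix1 : act (t * ε b' * t⁻¹) c = c := by
    rw [hc, ← hact.2]
    have : t * ε b' * t⁻¹ * t = t * ε b' := by
      rw [mul_assoc, mul_assoc, ← hd, hle]
    rw [this, hact.2]
    rw [act_eps_fix hε hafr]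
  have h1 : e * (t * ε b' * t⁻¹) = e :=
    nle_mul hidem ((hafr c (t * ε b' * t⁻¹) hidem).1 hfix1)
  have hfix2 : act t⁻¹ c = b' := by
    rw [hc, ← hact.2, ← hd]
    exact (hafr b' d hdd).2 (nle_of_mul heb'i hle)
  -- t⁻¹ * e * t is idempotent
  have hTT : (t*t⁻¹)*(t*t⁻¹) = t*t⁻¹ := by simpa only [iran] using iran_idem t
  have hett : e * (t * t⁻¹) = e := by
    have hX : t * ε b' * t⁻¹ * (t * t⁻¹) = t * ε b' * t⁻¹ := by
      simp only [mul_assoc]; rw [imi2]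
    calc e * (t*t⁻¹) = e * (t * ε b' * t⁻¹) * (t*t⁻¹) := by rw [h1]
      _ = e * (t * ε b' * t⁻¹ * (t*t⁻¹)) := by simp only [mul_assoc]
      _ = e * (t * ε b' * t⁻¹) := by rw [hX]
      _ = e := h1
  have hidem2 : (t⁻¹*e*t)*(t⁻¹*e*t) = t⁻¹*e*t := by
    calc (t⁻¹*e*t)*(t⁻¹*e*t) = t⁻¹*(e*((t*t⁻¹)*e))*t := by simp only [mul_assoc]
      _ = t⁻¹*(e*(e*(t*t⁻¹)))*t := by rw [idem_comm hTT hee]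
      _ = t⁻¹*((e*e)*(t*t⁻¹))*t := by simp only [mul_assoc]
      _ = t⁻¹*(e*(t*t⁻¹))*t := by rw [hee]
      _ = t⁻¹*e*t := by rw [hett]
  have hfix3 : act (t⁻¹*e*t) b' = b' := by
    conv_lhs => rw [← hfix2]
    rw [← hact.2]
    have : t⁻¹*e*t*t⁻¹ = t⁻¹*e := by
      rw [mul_assoc, mul_assoc, hett]
    rw [this, hact.2, he]
    rw [act_eps_fix hε hafr]
    exact hfix2
  have h2 : ε b' * (t⁻¹*e*t) = ε b' :=
    nle_mul hidem2 ((hafr b' (t⁻¹*e*t) hidem2).1 hfix3)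
  have hA : t * ε b' * t⁻¹ = (t * ε b' * t⁻¹) * e := by
    conv_lhs => rw [← h2]
    simp only [mul_assoc]
    rw [hett]
  have : e = t * ε b' * t⁻¹ := by
    calc e = e * (t * ε b' * t⁻¹) := h1.symm
      _ = (t * ε b' * t⁻¹) * e := idem_comm hee hidem
      _ = t * ε b' * t⁻¹ := hA.symm
  rw [hab, ← he, this, heb', hd]
  rw [show t * (t⁻¹ * t * ε b) * t⁻¹ = (t * (t⁻¹ * (t * ε b))) * t⁻¹ by
    simp only [mul_assoc], mim1]

end EpsLemmas

section RSDLemmas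
variable {K T : Type*} [InverseSemigroup K] [InverseSemigroup T]
variable {act : T → K → K} {ε : K → T}

lemma rsdMul_assoc (hact : IsAction act) (p q r : K × T) :
    rsdMul act (rsdMul act p q) r = rsdMul act p (rsdMul act q r) := by
  unfold rsdMul
  refine Prod.ext ?_ (mul_assoc _ _ _)
  show (p.1 * act p.2 q.1) * act (p.2 * q.2) r.1 = p.1 * act p.2 (q.1 * act q.2 r.1)
  rw [hact.1, hact.2, mul_assoc]

lemma mem_fix (hafr : AFR act ε) {p : K × T} (hp : p ∈ rsdSet ε) :
    act (iran p.2) p.1 = p.1 := by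
  have hp' : ε p.1 = iran p.2 := hp
  exact (hafr p.1 (iran p.2) (iran_idem p.2)).2
    (by rw [hp']; exact nle_refl_idem (iran_idem p.2))

lemma rsd_mul_mem (hact : IsAction act) (hε : IsSurjHomOntoE ε) (hafr : AFR act ε)
    {p q : K × T} (hp : p ∈ rsdSet ε) (hq : q ∈ rsdSet ε) :
    rsdMul act p q ∈ rsdSet ε := by
  have hp' : ε p.1 = iran p.2 := hp
  have hq' : ε q.1 = iran q.2 := hq
  show ε (p.1 * act p.2 q.1) = iran (p.2 * q.2)
  rw [hε.1, eps_act hact hε hafr, hq', hp']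
  unfold iran
  rw [is_mul_inv_rev]
  simp only [mul_assoc]
  rw [mim1]

end RSDLemmas
/-- Let `T` act on `K` by endomorphisms satisfying (AFR), let
`𝕊 = K ⋊ T` with `Θ = ker π₂`, and `ω_[t] ∈ Ω(𝕊, Θ)` as before.  Then for
every `(a,t) ∈ 𝕊` the following hold in the inverse semigroup `Ω(𝕊, Θ)`:
`ω_[t]⁻¹ ω_[t] = ω_[dom t]`, and
`ω_[dom t] ≥ π_{(t⁻¹·dom(a), dom(t))} = π_{dom((a,t))} = π_{(a,t)}⁻¹ π_{(a,t)}`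
in the natural partial order, where `π` denotes inner bitranslations of `𝕊`
(equality of bitranslations of `𝕊` being agreement on the carrier of `𝕊`). -/
theorem omega_t_inv_order {K T : Type*} [InverseSemigroup K]
    [InverseSemigroup T] (act : T → K → K) (hact : IsAction act)
    (ε : K → T) (hε : IsSurjHomOntoE ε) (hafr : AFR act ε)
    (a : K) (t : T) (hmem : (a, t) ∈ rsdSet ε) :
    -- `ω_[t⁻¹]` is the inverse `ω_[t]⁻¹` of `ω_[t]` in `Ω(𝕊, Θ)`:
    -- `ω_[t] ω_[t⁻¹] ω_[t] = ω_[t]` and `ω_[t⁻¹] ω_[t] ω_[t⁻¹] = ω_[t⁻¹]`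
    (∀ p ∈ rsdSet ε,
        Ltr act t (Ltr act t⁻¹ (Ltr act t p)) = Ltr act t p ∧
        Rtr act t (Rtr act t⁻¹ (Rtr act t p)) = Rtr act t p ∧
        Ltr act t⁻¹ (Ltr act t (Ltr act t⁻¹ p)) = Ltr act t⁻¹ p ∧
        Rtr act t⁻¹ (Rtr act t (Rtr act t⁻¹ p)) = Rtr act t⁻¹ p) ∧
    -- `ω_[t]⁻¹ ω_[t] = ω_[dom t]`
    (∀ p ∈ rsdSet ε,
        Ltr act t⁻¹ (Ltr act t p) = Ltr act (idom t) p ∧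
        Rtr act t (Rtr act t⁻¹ p) = Rtr act (idom t) p) ∧
    -- `(t⁻¹ · dom a, dom t) ∈ 𝕊`
    ((act t⁻¹ (idom a), idom t) ∈ rsdSet ε) ∧
    -- `π_{(a,t)}⁻¹ π_{(a,t)} = π_{dom (a,t)} = π_{(t⁻¹·dom(a), dom(t))}`:
    -- for every inverse `w` of `(a,t)` in `𝕊`,
    -- `w (a,t) = (t⁻¹·dom(a), dom(t))`
    (∀ w ∈ rsdSet ε,
        rsdMul act (rsdMul act (a, t) w) (a, t) = (a, t) →
        rsdMul act (rsdMul act w (a, t)) w = w →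
        rsdMul act w (a, t) = (act t⁻¹ (idom a), idom t)) ∧
    -- `ω_[dom t] ≥ π_{(t⁻¹·dom(a), dom(t))}`: there is an idempotent
    -- `e ∈ Ω(𝕊, Θ)` with `π_{(t⁻¹·dom(a), dom(t))} = e · ω_[dom t]`
    (∃ le re : K × T → K × T,
        MemOmegaPi2 (rsdMul act) (rsdSet ε) le re ∧
        (∀ p ∈ rsdSet ε, le (le p) = le p ∧ re (re p) = re p) ∧
        (∀ p ∈ rsdSet ε,
          rsdMul act (act t⁻¹ (idom a), idom t) p =
            le (Ltr act (idom t) p) ∧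
          rsdMul act p (act t⁻¹ (idom a), idom t) =
            Rtr act (idom t) (re p))) := by

  have hmem' : ε a = iran t := hmem
  have hTT : (t*t⁻¹)*(t*t⁻¹) = t*t⁻¹ := by simpa only [iran] using iran_idem t
  have hdd : (t⁻¹*t)*(t⁻¹*t) = t⁻¹*t := by simpa only [idom] using idom_idem t
  have key1 : ∀ u : T, iran (u * t * t⁻¹) = iran (u * t) := fun u => by
    unfold iran
    rw [is_mul_inv_rev, is_inv_inv, is_mul_inv_rev]
    simp only [mul_assoc]
    rw [imi1]
  have key2 : ∀ u : T, iran (u * t⁻¹ * t) = iran (u * t⁻¹) := fun u => by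
    unfold iran
    rw [is_mul_inv_rev, is_mul_inv_rev, is_inv_inv]
    simp only [mul_assoc]
    rw [imi1]
  have h3 : (act t⁻¹ (idom a), idom t) ∈ rsdSet ε := by
    show ε (act t⁻¹ (idom a)) = iran (idom t)
    simp only [idom, iran]
    rw [eps_act hact hε hafr, is_inv_inv, hε.1, eps_inv hε, eps_idem hε, hmem',
      idem_self_inv hdd]
    simp only [iran, mul_assoc]
  refine ⟨?_, ?_, h3, ?_, ?_⟩
  · -- part 1
    intro p hp
    refine ⟨?_, ?_, ?_, ?_⟩
    · simp only [Ltr, Prod.mk.injEq]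
      exact ⟨by rw [← hact.2, ← hact.2, is_mim], by rw [mim1]⟩
    · simp only [Rtr, Prod.mk.injEq]
      have hs : p.2 * t * t⁻¹ * t = p.2 * t := by rw [mul_assoc, mul_assoc, mim2]
      constructor
      · rw [hs, key1 p.2, ← hact.2, ← hact.2, iran_idem, iran_idem]
      · exact hs
    · simp only [Ltr, Prod.mk.injEq]
      exact ⟨by rw [← hact.2, ← hact.2, is_imi], by rw [imi1]⟩
    · simp only [Rtr, Prod.mk.injEq]
      have hs : p.2 * t⁻¹ * t * t⁻¹ = p.2 * t⁻¹ := by rw [mul_assoc, mul_assoc, imi2]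
      constructor
      · rw [hs, key2 p.2, ← hact.2, ← hact.2, iran_idem, iran_idem]
      · exact hs
  · -- part 2
    intro p hp
    constructor
    · simp only [Ltr, Prod.mk.injEq, idom]
      exact ⟨by rw [← hact.2], by rw [mul_assoc]⟩
    · simp only [Rtr, Prod.mk.injEq, idom]
      have hs : p.2 * t⁻¹ * t = p.2 * (t⁻¹ * t) := mul_assoc _ _ _
      constructor
      · rw [← hs, key2 p.2, ← hact.2, iran_idem]
      · exact hs
  · -- part 4
    intro w hw h1 h2
    obtain ⟨b, u⟩ := w
    have e1 : t * u * t = t := congrArg Prod.snd h1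
    have e2 : u * t * u = u := congrArg Prod.snd h2
    have hu : u = t⁻¹ := is_invu e1 e2
    subst hu
    have hw' : ε b = iran t⁻¹ := hw
    have hεb : ε b = t⁻¹ * t := by rw [hw']; unfold iran; rw [is_inv_inv]
    have hfa : act (t*t⁻¹) a = a := (hafr a (t*t⁻¹) hTT).2
      (by rw [hmem']; exact nle_refl_idem (iran_idem t))
    have hfb : act (t⁻¹*t) b = b := (hafr b (t⁻¹*t) hdd).2
      (by rw [hεb]; exact nle_refl_idem hdd)
    have c1 : (a * act t b) * act (t*t⁻¹) a = a := congrArg Prod.fst h1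
    rw [hfa] at c1
    have c2 : (b * act t⁻¹ a) * act (t⁻¹*t) b = b := congrArg Prod.fst h2
    rw [hfb] at c2
    have hcc : act t b * a * act t b = act t b := by
      conv_lhs => rw [← hfa]
      rw [hact.2, ← hact.1, ← hact.1, c2]
    have hinv : act t b = a⁻¹ := is_invu c1 hcc
    have hb2 : b = act t⁻¹ a⁻¹ := by rw [← hinv, ← hact.2]; exact hfb.symm
    show (b * act t⁻¹ a, t⁻¹ * t) = (act t⁻¹ (idom a), idom t)
    rw [hb2, ← hact.1]
    rfl
  · -- part 5
    have hfixn : act (idom t) (act t⁻¹ (idom a)) = act t⁻¹ (idom a) := by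
      rw [← hact.2]
      show act (t⁻¹*t*t⁻¹) (idom a) = act t⁻¹ (idom a)
      rw [is_imi]
    have hnn : rsdMul act (act t⁻¹ (idom a), idom t) (act t⁻¹ (idom a), idom t)
        = (act t⁻¹ (idom a), idom t) := by
      show (act t⁻¹ (idom a) * act (idom t) (act t⁻¹ (idom a)), idom t * idom t)
        = (act t⁻¹ (idom a), idom t)
      rw [hfixn, ← hact.1, idom_idem, idom_idem]
    refine ⟨fun p => rsdMul act (act t⁻¹ (idom a), idom t) p,
            fun p => rsdMul act p (act t⁻¹ (idom a), idom t),
            ⟨⟨?_, ?_⟩, ?_, ⟨idom t, ?_⟩⟩, ?_, ?_⟩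
    · intro s hs
      exact ⟨rsd_mul_mem hact hε hafr h3 hs, rsd_mul_mem hact hε hafr hs h3⟩
    · intro s hs r hr
      exact ⟨(rsdMul_assoc hact _ s r).symm, rsdMul_assoc hact s r _,
        (rsdMul_assoc hact s _ r).symm⟩
    · intro p hp q hq h
      constructor
      · show idom t * p.2 = idom t * q.2
        rw [h]
      · show p.2 * idom t = q.2 * idom t
        rw [h]
    · intro p hp
      exact ⟨rfl, rfl⟩
    · intro p hp
      constructor
      · show rsdMul act _ (rsdMul act _ p) = rsdMul act _ p
        rw [← rsdMul_assoc hact, hnn]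
      · show rsdMul act (rsdMul act p _) _ = rsdMul act p _
        rw [rsdMul_assoc hact, hnn]
    · intro p hp
      constructor
      · simp only [rsdMul, Ltr, Prod.mk.injEq]
        exact ⟨by rw [← hact.2, idom_idem], by rw [← mul_assoc, idom_idem]⟩
      · have hq : rsdMul act p (act t⁻¹ (idom a), idom t) ∈ rsdSet ε :=
          rsd_mul_mem hact hε hafr hp h3
        have hQ2 : p.2 * idom t * idom t = p.2 * idom t := by
          rw [mul_assoc, idom_idem]
        have hfix := mem_fix hafr hq
        simp only [rsdMul, Rtr] at hfix ⊢
        rw [hQ2, hfix]
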